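/- Let S be a dense subsemigroup of ((0,∞),+), let (X, ⟨T_s⟩_{s∈S}) be a dynamical system, and let x, y ∈ X. There exists an idempotent u ∈ K(O⁺(S)) such that T_u(x) = y if and only if y is uniformly recurrent near zero and x, y are proximal near zero. -/
import Mathlib


open Filter Topology Set

noncomputable section

/-- The extension of `+` on a discrete semigroup to its Stone–Čech compactification
(space of ultrafilters): `A ∈ p + q` iff `{x : -x + A ∈ q} ∈ p`. -/
def uadd {α : Type} [Add α] (p q : Ultrafilter α) : Ultrafilter α :=
  p.bind fun a => q.map (a + ·)

/-- `O⁺(S) = {p ∈ βS : for all ε > 0, S ∩ (0,ε) ∈ p}`. -/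
def Oplus (S : AddSubsemigroup ℝ) : Set (Ultrafilter S) :=
  {p | ∀ ε : ℝ, 0 < ε → {x : S | (x : ℝ) < ε} ∈ p}

def IsLeftIdealIn {α : Type} [Add α] (T L : Set (Ultrafilter α)) : Prop :=
  L.Nonempty ∧ L ⊆ T ∧ ∀ p ∈ T, ∀ q ∈ L, uadd p q ∈ L

def IsMinimalLeftIdealIn {α : Type} [Add α] (T L : Set (Ultrafilter α)) : Prop :=
  IsLeftIdealIn T L ∧ ∀ L', IsLeftIdealIn T L' → L' ⊆ L → L' = L

/-- The smallest ideal `K(O⁺(S))`, described as the union of all minimal left ideals. -/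
def KOplus (S : AddSubsemigroup ℝ) : Set (Ultrafilter S) :=
  {p | ∃ L, IsMinimalLeftIdealIn (Oplus S) L ∧ p ∈ L}

/-- A dynamical system over an additive semigroup. -/
structure DynSys (σ : Type) [Add σ] where
  X : Type
  [ts : TopologicalSpace X]
  [cs : CompactSpace X]
  [t2 : T2Space X]
  T : σ → X → X
  cont : ∀ s, Continuous (T s)
  comp : ∀ s t, T s ∘ T t = T (s + t)

attribute [instance] DynSys.ts DynSys.cs DynSys.t2

/-- `T_p(x) = p-lim_{s ∈ S} T_s(x)`. -/
def DynSys.Tp {σ : Type} [Add σ] (D : DynSys σ) (p : Ultrafilter σ) (x : D.X) : D.X :=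
  (p.map fun s => D.T s x).lim

/-- `B` is syndetic near zero. -/
def syndeticNearZero (S : AddSubsemigroup ℝ) (A : Set S) : Prop :=
  ∀ ε : ℝ, 0 < ε → ∃ F : Finset S, F.Nonempty ∧ (∀ t ∈ F, (t : ℝ) < ε) ∧
    ∃ δ : ℝ, 0 < δ ∧ ∀ s : S, (s : ℝ) < δ → ∃ t ∈ F, t + s ∈ A

def uniformlyRecurrentNearZero (S : AddSubsemigroup ℝ) (D : DynSys S) (x : D.X) : Prop :=
  ∀ W ∈ nhds x, syndeticNearZero S {s : S | D.T s x ∈ W}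

/-- `x` and `y` are proximal near zero. -/
def proximalNearZero (S : AddSubsemigroup ℝ) (D : DynSys S) (x y : D.X) : Prop :=
  ∀ U ∈ nhdsSet (Set.diagonal D.X), ∀ ε : ℝ, 0 < ε →
    ∃ s : S, (s : ℝ) < ε ∧ (D.T s x, D.T s y) ∈ U

/-- `A` is piecewise syndetic near zero. -/
def piecewiseSyndeticNearZero (S : AddSubsemigroup ℝ) (A : Set S) : Prop :=
  ∃ (F : ℕ → Finset S) (δ : ℕ → ℝ),
    (∀ n : ℕ, (F n).Nonempty ∧ (∀ t ∈ F n, (t : ℝ) < 1 / (n + 1)) ∧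
      0 < δ n ∧ δ n < 1 / (n + 1)) ∧
    ∀ G : Finset S, ∀ μ : ℝ, 0 < μ → ∃ x : S, (x : ℝ) < μ ∧
      ∀ n : ℕ, ∀ g ∈ G, (g : ℝ) < δ n → ∃ t ∈ F n, t + (g + x) ∈ A

/-- `A` is a J-set near zero. -/
def JSetNearZero (S : AddSubsemigroup ℝ) (A : Set S) : Prop :=
  ∀ F : Finset (ℕ → S), F.Nonempty →
    (∀ f ∈ F, Tendsto (fun n => ((f n : S) : ℝ)) atTop (nhds 0)) →
    ∀ δ : ℝ, 0 < δ → ∃ a : S, (a : ℝ) < δ ∧ ∃ H : Finset ℕ, H.Nonempty ∧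
      ∀ f ∈ F, ∃ b ∈ A, (b : ℝ) = (a : ℝ) + ∑ t ∈ H, ((f t : S) : ℝ)

def J0 (S : AddSubsemigroup ℝ) : Set (Ultrafilter S) :=
  {p | p ∈ Oplus S ∧ ∀ A ∈ p, JSetNearZero S A}

/-- jointly intermittently uniformly recurrent near zero. -/
def JIUR0 (S : AddSubsemigroup ℝ) (D : DynSys S) (x y : D.X) : Prop :=
  ∀ U ∈ nhds y, piecewiseSyndeticNearZero S {s : S | D.T s x ∈ U ∧ D.T s y ∈ U}

/-- jointly intermittently almost uniformly recurrent near zero. -/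
def JIAUR0 (S : AddSubsemigroup ℝ) (D : DynSys S) (x y : D.X) : Prop :=
  ∀ U ∈ nhds y, JSetNearZero S {s : S | D.T s x ∈ U ∧ D.T s y ∈ U}
section Aux

open TopologicalSpace

theorem mem_uadd {α : Type} [Add α] {p q : Ultrafilter α} {A : Set α} :
    A ∈ uadd p q ↔ {a | {b | a + b ∈ A} ∈ q} ∈ p := Iff.rfl

theorem uadd_assoc' {α : Type} [AddSemigroup α] (p q r : Ultrafilter α) :
    uadd (uadd p q) r = uadd p (uadd q r) := by
  ext A
  simp only [mem_uadd]
  refine iff_of_eq (congrArg (· ∈ p) ?_)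
  ext a
  refine iff_of_eq (congrArg (· ∈ q) ?_)
  ext b
  refine iff_of_eq (congrArg (· ∈ r) ?_)
  ext c
  rw [Set.mem_setOf_eq, Set.mem_setOf_eq, Set.mem_setOf_eq, add_assoc]

theorem continuous_uadd_right {α : Type} [Add α] (q : Ultrafilter α) :
    Continuous fun p : Ultrafilter α => uadd p q := by
  refine ultrafilterBasis_is_basis.continuous_iff.mpr ?_
  rintro s ⟨A, rfl⟩
  exact ultrafilter_isOpen_basic {a | {b | a + b ∈ A} ∈ q}

/-- existence of an ultrafilter containing a directed family of nonempty sets -/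
theorem exists_ultra {γ ι : Type} [Nonempty ι] (A : ι → Set γ)
    (hne : ∀ i, (A i).Nonempty) (hdir : ∀ i j, ∃ k, A k ⊆ A i ∧ A k ⊆ A j) :
    ∃ p : Ultrafilter γ, ∀ i, A i ∈ p := by
  have hd : Directed (· ≥ ·) fun i => Filter.principal (A i) := fun i j => by
    obtain ⟨k, h1, h2⟩ := hdir i j
    exact ⟨k, Filter.principal_mono.2 h1, Filter.principal_mono.2 h2⟩
  haveI : (⨅ i, Filter.principal (A i)).NeBot :=
    Filter.iInf_neBot_of_directed' hd fun i => Filter.principal_neBot_iff.mpr (hne i)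
  refine ⟨Ultrafilter.of (⨅ i, Filter.principal (A i)), fun i => ?_⟩
  exact Filter.le_def.mp (Ultrafilter.of_le _) _
    (Filter.mem_iInf_of_mem i (Filter.mem_principal_self _))

section Dyn

variable {σ : Type} [Add σ]

theorem ultra_mem_closed {X : Type} [TopologicalSpace X] {m : Ultrafilter X} {w : X}
    (h : ↑m ≤ nhds w) {C : Set X} (hC : IsClosed C) (hm : C ∈ m) : w ∈ C := by
  rw [← hC.closure_eq, mem_closure_iff_nhds]
  exact fun t ht => Ultrafilter.nonempty_of_mem (Filter.inter_mem (h ht) hm)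

theorem DynSys.Tp_le_nhds (D : DynSys σ) (p : Ultrafilter σ) (x : D.X) :
    ↑(p.map fun s => D.T s x) ≤ nhds (D.Tp p x) :=
  Ultrafilter.le_nhds_lim _

theorem DynSys.Tp_mem_open (D : DynSys σ) {p : Ultrafilter σ} {x : D.X} {U : Set D.X}
    (hU : IsOpen U) (h : D.Tp p x ∈ U) : {s | D.T s x ∈ U} ∈ p :=
  Ultrafilter.mem_map.mp (D.Tp_le_nhds p x (hU.mem_nhds h))

theorem DynSys.Tp_mem_closed (D : DynSys σ) {p : Ultrafilter σ} {x : D.X} {C : Set D.X}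
    (hC : IsClosed C) (h : {s | D.T s x ∈ C} ∈ p) : D.Tp p x ∈ C :=
  ultra_mem_closed (D.Tp_le_nhds p x) hC (Ultrafilter.mem_map.mpr h)

theorem DynSys.Tp_eq (D : DynSys σ) {p : Ultrafilter σ} {x : D.X} {w : D.X}
    (h : ∀ U : Set D.X, IsOpen U → w ∈ U → {s | D.T s x ∈ U} ∈ p) : D.Tp p x = w := by
  haveI : Nonempty D.X := ⟨x⟩
  refine Ultrafilter.lim_eq_iff_le_nhds.mpr ?_
  rw [le_nhds_iff]
  intro U hwU hU
  exact Ultrafilter.mem_coe.mpr (Ultrafilter.mem_map.mpr (h U hU hwU))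

theorem DynSys.T_comp (D : DynSys σ) (a b : σ) (x : D.X) :
    D.T a (D.T b x) = D.T (a + b) x := by
  have := congrFun (D.comp a b) x
  simpa using this

theorem DynSys.Tp_uadd (D : DynSys σ) (p q : Ultrafilter σ) (x : D.X) :
    D.Tp (uadd p q) x = D.Tp p (D.Tp q x) := by
  refine D.Tp_eq fun U hU hwU => ?_
  rw [mem_uadd]
  refine Filter.mem_of_superset (D.Tp_mem_open hU hwU) fun a ha => ?_
  have hU' : IsOpen (D.T a ⁻¹' U) := hU.preimage (D.cont a)
  refine Filter.mem_of_superset (D.Tp_mem_open hU' ha) fun b hb => ?_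
  show D.T (a + b) x ∈ U
  rw [← D.T_comp a b x]
  exact hb

theorem DynSys.continuous_Tp (D : DynSys σ) (x : D.X) :
    Continuous fun p : Ultrafilter σ => D.Tp p x := by
  rw [continuous_def]
  intro U hU
  rw [isOpen_iff_forall_mem_open]
  rintro p (hp : D.Tp p x ∈ U)
  obtain ⟨V, hVn, hVc, hVU⟩ := exists_mem_nhds_isClosed_subset (hU.mem_nhds hp)
  refine ⟨{q : Ultrafilter σ | {s | D.T s x ∈ interior V} ∈ q}, fun q hq => ?_,
    ultrafilter_isOpen_basic _, ?_⟩
  · exact hVU (D.Tp_mem_closed hVc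
      (Filter.mem_of_superset hq fun s hs => (interior_subset : interior V ⊆ V) hs))
  · exact D.Tp_mem_open isOpen_interior (mem_interior_iff_mem_nhds.mpr hVn)

theorem DynSys.isClosed_Tp_fixed (D : DynSys σ) (y c : D.X) :
    IsClosed {p : Ultrafilter σ | D.Tp p y = c} :=
  isClosed_singleton.preimage (D.continuous_Tp y)

end Dyn

end Aux

section OplusFacts

variable {S : AddSubsemigroup ℝ}

theorem small_nonempty (hdense : Set.Ioi (0 : ℝ) ⊆ closure (S : Set ℝ)) {ε : ℝ} (hε : 0 < ε) :
    ∃ s : S, (s : ℝ) < ε := by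
  have h2 : (ε / 2) ∈ closure (S : Set ℝ) := hdense (Set.mem_Ioi.mpr (half_pos hε))
  rw [Metric.mem_closure_iff] at h2
  obtain ⟨b, hbS, hbd⟩ := h2 (ε / 2) (half_pos hε)
  refine ⟨⟨b, hbS⟩, ?_⟩
  have h3 := abs_lt.mp (by simpa [Real.dist_eq] using hbd)
  show b < ε
  linarith [h3.1, h3.2]

theorem Oplus_nonempty (hdense : Set.Ioi (0 : ℝ) ⊆ closure (S : Set ℝ)) :
    (Oplus S).Nonempty := by
  haveI : Nonempty {δ : ℝ // 0 < δ} := ⟨⟨1, one_pos⟩⟩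
  obtain ⟨p, hp⟩ := exists_ultra (fun δ : {δ : ℝ // 0 < δ} => {x : S | (x : ℝ) < δ.1})
    (fun δ => small_nonempty hdense δ.2) (fun i j =>
      ⟨⟨min i.1 j.1, lt_min i.2 j.2⟩,
        fun x hx => show (x : ℝ) < i.1 from lt_of_lt_of_le hx (min_le_left _ _),
        fun x hx => show (x : ℝ) < j.1 from lt_of_lt_of_le hx (min_le_right _ _)⟩)
  exact ⟨p, fun ε hε => hp ⟨ε, hε⟩⟩

theorem Oplus_closed : IsClosed (Oplus S) := by
  have h : Oplus S = ⋂ ε ∈ Set.Ioi (0 : ℝ), {p : Ultrafilter S | {x : S | (x : ℝ) < ε} ∈ p} := by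
    ext p
    simp only [Oplus, Set.mem_setOf_eq, Set.mem_iInter, Set.mem_Ioi]
  rw [h]
  exact isClosed_biInter fun ε _ => ultrafilter_isClosed_basic _

theorem Oplus_add {p q : Ultrafilter S} (hp : p ∈ Oplus S) (hq : q ∈ Oplus S) :
    uadd p q ∈ Oplus S := by
  intro ε hε
  show {a : S | {b : S | ((a + b : S) : ℝ) < ε} ∈ q} ∈ p
  refine Filter.mem_of_superset (hp (ε / 2) (half_pos hε)) fun a ha => ?_
  refine Filter.mem_of_superset (hq (ε / 2) (half_pos hε)) fun b hb => ?_
  simp only [Set.mem_setOf_eq] at ha hb ⊢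
  push_cast
  linarith

theorem isLeftIdeal_image (hdense : Set.Ioi (0 : ℝ) ⊆ closure (S : Set ℝ))
    {r : Ultrafilter S} (hr : r ∈ Oplus S) :
    IsLeftIdealIn (Oplus S) ((fun q => uadd q r) '' Oplus S) := by
  refine ⟨(Oplus_nonempty hdense).image _, ?_, ?_⟩
  · rintro _ ⟨q, hq, rfl⟩; exact Oplus_add hq hr
  · rintro p hp _ ⟨q, hq, rfl⟩
    exact ⟨uadd p q, Oplus_add hp hq, uadd_assoc' p q r⟩

theorem image_closed (r : Ultrafilter S) :
    IsClosed ((fun q => uadd q r) '' Oplus S) :=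
  (Oplus_closed.isCompact.image (continuous_uadd_right r)).isClosed

theorem image_subset_leftIdeal {L : Set (Ultrafilter S)} (hL : IsLeftIdealIn (Oplus S) L)
    {r : Ultrafilter S} (hr : r ∈ L) : (fun q => uadd q r) '' Oplus S ⊆ L := by
  rintro _ ⟨q, hq, rfl⟩; exact hL.2.2 q hq r hr

theorem exists_minimal_closed_leftIdeal (hdense : Set.Ioi (0 : ℝ) ⊆ closure (S : Set ℝ))
    {I : Set (Ultrafilter S)} (hI : IsLeftIdealIn (Oplus S) I) (hIc : IsClosed I) :
    ∃ L, L ⊆ I ∧ IsMinimalLeftIdealIn (Oplus S) L ∧ IsClosed L := by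
  set C : Set (Set (Ultrafilter S)) :=
    {L | IsLeftIdealIn (Oplus S) L ∧ IsClosed L ∧ L ⊆ I} with hCdef
  have hbound : ∀ c ⊆ C, IsChain (· ⊆ ·) c → c.Nonempty → ∃ lb ∈ C, ∀ s ∈ c, lb ⊆ s := by
    intro c hcC hchain hcne
    obtain ⟨c₀, hc₀⟩ := hcne
    haveI : Nonempty c := Set.Nonempty.to_subtype ⟨c₀, hc₀⟩
    have hne : (⋂₀ c).Nonempty := by
      apply IsCompact.nonempty_sInter_of_directed_nonempty_isCompact_isClosed
      · intro s hs t ht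
        rcases hchain.total hs ht with h | h
        · exact ⟨s, hs, subset_rfl, h⟩
        · exact ⟨t, ht, h, subset_rfl⟩
      · exact fun U hU => (hcC hU).1.1
      · exact fun U hU => (hcC hU).2.1.isCompact
      · exact fun U hU => (hcC hU).2.1
    refine ⟨⋂₀ c, ⟨⟨hne, ?_, ?_⟩, ?_, ?_⟩, fun s hs => Set.sInter_subset_of_mem hs⟩
    · exact (Set.sInter_subset_of_mem hc₀).trans (hcC hc₀).1.2.1
    · intro p hp q hq
      exact Set.mem_sInter.mpr fun U hU =>
        (hcC hU).1.2.2 p hp q (Set.mem_sInter.mp hq U hU)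
    · exact isClosed_sInter fun U hU => (hcC hU).2.1
    · exact (Set.sInter_subset_of_mem hc₀).trans (hcC hc₀).2.2
  obtain ⟨L, hLsubI, hLmem⟩ := zorn_superset_nonempty C hbound I ⟨hI, hIc, subset_rfl⟩
  obtain ⟨hLid, hLc, hLI'⟩ := hLmem.1
  refine ⟨L, hLI', ⟨hLid, ?_⟩, hLc⟩
  intro L' hL' hL'sub
  obtain ⟨r, hrL'⟩ := hL'.1
  have himg : ((fun q => uadd q r) '' Oplus S) ∈ C :=
    ⟨isLeftIdeal_image hdense (hL'.2.1 hrL'), image_closed r,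
      ((image_subset_leftIdeal hL' hrL').trans hL'sub).trans hLI'⟩
  have hsub : ((fun q => uadd q r) '' Oplus S) ⊆ L :=
    (image_subset_leftIdeal hL' hrL').trans hL'sub
  have hLsub2 : L ⊆ L' := (hLmem.2 himg hsub).trans (image_subset_leftIdeal hL' hrL')
  exact subset_antisymm hL'sub hLsub2

theorem DynSys.tendsto_Tp (D : DynSys S) (p : Ultrafilter S) (x : D.X) :
    Filter.Tendsto (fun s : S => D.T s x) ↑p (nhds (D.Tp p x)) := by
  have h := D.Tp_le_nhds p x
  rwa [Ultrafilter.coe_map] at h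

theorem ur_transfer {D : DynSys S} {y : D.X}
    (hur : uniformlyRecurrentNearZero S D y) {p : Ultrafilter S} (hp : p ∈ Oplus S) :
    ∃ q ∈ Oplus S, D.Tp (uadd q p) y = y := by
  set z := D.Tp p y with hz
  haveI : Nonempty ({W : Set D.X // W ∈ nhds y} × {ε : ℝ // 0 < ε}) :=
    ⟨⟨⟨Set.univ, Filter.univ_mem⟩, ⟨1, one_pos⟩⟩⟩
  have hne : ∀ i : {W : Set D.X // W ∈ nhds y} × {ε : ℝ // 0 < ε},
      {t : S | (t : ℝ) < i.2.1 ∧ D.T t z ∈ closure i.1.1}.Nonempty := by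
    rintro ⟨⟨W, hW⟩, ⟨ε, hε⟩⟩
    obtain ⟨F, hFne, hFsm, δ, hδ, hsynd⟩ := hur W hW ε hε
    have hδp : {s : S | (s : ℝ) < δ} ∈ p := hp δ hδ
    have hcov : (⋃ t ∈ (F : Set S), {s : S | D.T (t + s) y ∈ W}) ∈ p :=
      Filter.mem_of_superset hδp fun s hs => by
        obtain ⟨t, htF, hts⟩ := hsynd s hs
        exact Set.mem_biUnion htF hts
    obtain ⟨t, htF, hT⟩ := (Ultrafilter.finite_biUnion_mem_iff F.finite_toSet).mp hcov
    refine ⟨t, hFsm t htF, ?_⟩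
    have hten2 : Filter.Tendsto (fun s : S => D.T t (D.T s y)) ↑p (nhds (D.T t z)) :=
      ((D.cont t).tendsto z).comp (D.tendsto_Tp p y)
    refine ultra_mem_closed (m := p.map fun s : S => D.T t (D.T s y)) ?_ isClosed_closure ?_
    · rw [Ultrafilter.coe_map]; exact hten2
    · refine Ultrafilter.mem_map.mpr (Filter.mem_of_superset hT fun s hs => ?_)
      show D.T t (D.T s y) ∈ closure W
      rw [D.T_comp]
      exact subset_closure hs
  have hdir : ∀ i j : {W : Set D.X // W ∈ nhds y} × {ε : ℝ // 0 < ε},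
      ∃ k : {W : Set D.X // W ∈ nhds y} × {ε : ℝ // 0 < ε},
      {t : S | (t : ℝ) < k.2.1 ∧ D.T t z ∈ closure k.1.1} ⊆
        {t : S | (t : ℝ) < i.2.1 ∧ D.T t z ∈ closure i.1.1} ∧
      {t : S | (t : ℝ) < k.2.1 ∧ D.T t z ∈ closure k.1.1} ⊆
        {t : S | (t : ℝ) < j.2.1 ∧ D.T t z ∈ closure j.1.1} := by
    rintro ⟨⟨W, hW⟩, ⟨ε, hε⟩⟩ ⟨⟨W', hW'⟩, ⟨ε', hε'⟩⟩
    refine ⟨(⟨W ∩ W', Filter.inter_mem hW hW'⟩, ⟨min ε ε', lt_min hε hε'⟩), ?_, ?_⟩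
    · rintro t ⟨h1, h2⟩
      exact ⟨h1.trans_le (min_le_left _ _), closure_mono Set.inter_subset_left h2⟩
    · rintro t ⟨h1, h2⟩
      exact ⟨h1.trans_le (min_le_right _ _), closure_mono Set.inter_subset_right h2⟩
  obtain ⟨q, hq⟩ := exists_ultra _ hne hdir
  refine ⟨q, fun ε hε => Filter.mem_of_superset
    (hq (⟨Set.univ, Filter.univ_mem⟩, ⟨ε, hε⟩)) (fun t ht => ht.1), ?_⟩
  rw [D.Tp_uadd, ← hz]
  by_contra hne'
  obtain ⟨W, hWn, hWc, hWsub⟩ := exists_mem_nhds_isClosed_subset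
    (compl_singleton_mem_nhds (Ne.symm hne') : {D.Tp q z}ᶜ ∈ nhds y)
  have h1 : D.Tp q z ∈ closure W :=
    D.Tp_mem_closed isClosed_closure
      (Filter.mem_of_superset (hq (⟨W, hWn⟩, ⟨1, one_pos⟩)) fun t ht => ht.2)
  rw [hWc.closure_eq] at h1
  exact hWsub h1 rfl

end OplusFacts

theorem stmt7 (S : AddSubsemigroup ℝ)
    (hpos : ∀ x : ℝ, x ∈ S → 0 < x)
    (hdense : Set.Ioi (0 : ℝ) ⊆ closure (S : Set ℝ))
    (D : DynSys S) (x y : D.X) :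
    (∃ u ∈ KOplus S, uadd u u = u ∧ D.Tp u x = y) ↔
      uniformlyRecurrentNearZero S D y ∧ proximalNearZero S D x y := by
  constructor
  · rintro ⟨u, ⟨L, hLmin, huL⟩, huid, hTux⟩
    have hLid := hLmin.1
    have huO : u ∈ Oplus S := hLid.2.1 huL
    have hTuy : D.Tp u y = y := by
      conv_lhs => rw [← hTux]
      rw [← D.Tp_uadd, huid, hTux]
    refine ⟨?_, ?_⟩
    · -- uniformly recurrent near zero
      intro W hW ε hε
      by_contra hcon
      obtain ⟨s₀, hs₀⟩ := small_nonempty hdense hε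
      have hs₀' : ∀ t ∈ ({s₀} : Finset S), (t : ℝ) < ε := by
        intro t ht
        rw [Finset.mem_singleton] at ht
        rw [ht]
        exact hs₀
      haveI : Nonempty ({F : Finset S // F.Nonempty ∧ ∀ t ∈ F, (t : ℝ) < ε} × {δ : ℝ // 0 < δ}) :=
        ⟨⟨⟨{s₀}, Finset.singleton_nonempty s₀, hs₀'⟩, ⟨1, one_pos⟩⟩⟩
      have hne : ∀ i : {F : Finset S // F.Nonempty ∧ ∀ t ∈ F, (t : ℝ) < ε} × {δ : ℝ // 0 < δ},
          {s : S | (s : ℝ) < i.2.1 ∧ ∀ t ∈ i.1.1, D.T (t + s) y ∉ W}.Nonempty := by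
        rintro ⟨⟨F, hFne, hFsm⟩, ⟨δ, hδ⟩⟩
        by_contra hem
        rw [Set.not_nonempty_iff_eq_empty] at hem
        apply hcon
        refine ⟨F, hFne, hFsm, δ, hδ, fun s hs => ?_⟩
        by_contra hno
        push_neg at hno
        have hmem : s ∈ {s : S | (s : ℝ) < δ ∧ ∀ t ∈ F, D.T (t + s) y ∉ W} := ⟨hs, hno⟩
        rw [hem] at hmem
        exact hmem
      have hdir : ∀ i j : {F : Finset S // F.Nonempty ∧ ∀ t ∈ F, (t : ℝ) < ε} × {δ : ℝ // 0 < δ},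
          ∃ k : {F : Finset S // F.Nonempty ∧ ∀ t ∈ F, (t : ℝ) < ε} × {δ : ℝ // 0 < δ},
            {s : S | (s : ℝ) < k.2.1 ∧ ∀ t ∈ k.1.1, D.T (t + s) y ∉ W} ⊆
              {s : S | (s : ℝ) < i.2.1 ∧ ∀ t ∈ i.1.1, D.T (t + s) y ∉ W} ∧
            {s : S | (s : ℝ) < k.2.1 ∧ ∀ t ∈ k.1.1, D.T (t + s) y ∉ W} ⊆
              {s : S | (s : ℝ) < j.2.1 ∧ ∀ t ∈ j.1.1, D.T (t + s) y ∉ W} := by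
        rintro ⟨⟨F, hFne, hFsm⟩, ⟨δ, hδ⟩⟩ ⟨⟨F', hF'ne, hF'sm⟩, ⟨δ', hδ'⟩⟩
        refine ⟨(⟨F ∪ F', hFne.mono Finset.subset_union_left, ?_⟩,
            ⟨min δ δ', lt_min hδ hδ'⟩), ?_, ?_⟩
        · intro t ht
          rcases Finset.mem_union.mp ht with h | h
          · exact hFsm t h
          · exact hF'sm t h
        · rintro s ⟨h1, h2⟩
          exact ⟨h1.trans_le (min_le_left _ _),
            fun t ht => h2 t (Finset.mem_union_left _ ht)⟩
        · rintro s ⟨h1, h2⟩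
          exact ⟨h1.trans_le (min_le_right _ _),
            fun t ht => h2 t (Finset.mem_union_right _ ht)⟩
      obtain ⟨p, hpA⟩ := exists_ultra _ hne hdir
      have hpO : p ∈ Oplus S := fun δ hδ =>
        Filter.mem_of_superset
          (hpA (⟨{s₀}, Finset.singleton_nonempty s₀, hs₀'⟩, ⟨δ, hδ⟩)) fun s hs => hs.1
      have hpuL : uadd p u ∈ L := hLid.2.2 p hpO u huL
      have hpuO : uadd p u ∈ Oplus S := hLid.2.1 hpuL
      have heq : ((fun q => uadd q (uadd p u)) '' Oplus S) = L :=
        hLmin.2 _ (isLeftIdeal_image hdense hpuO) (image_subset_leftIdeal hLid hpuL)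
      have huimg : u ∈ (fun q => uadd q (uadd p u)) '' Oplus S := heq ▸ huL
      obtain ⟨r, hrO, hru⟩ := huimg
      have hru' : uadd r (uadd p u) = u := hru
      have hTrp : D.Tp (uadd r p) y = y := by
        have h2 : D.Tp (uadd r (uadd p u)) y = y := by rw [hru', hTuy]
        rw [D.Tp_uadd, D.Tp_uadd, hTuy] at h2
        rw [D.Tp_uadd]
        exact h2
      have hyint : y ∈ interior W := mem_interior_iff_mem_nhds.mpr hW
      have hBmem : {s : S | D.T s y ∈ interior W} ∈ uadd r p :=
        D.Tp_mem_open isOpen_interior (by rw [hTrp]; exact hyint)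
      have hBmem' : {a : S | {b : S | D.T (a + b) y ∈ interior W} ∈ p} ∈ r := hBmem
      have hrε : {t : S | (t : ℝ) < ε} ∈ r := hrO ε hε
      obtain ⟨t, htε, htB⟩ := Ultrafilter.nonempty_of_mem (Filter.inter_mem hrε hBmem')
      have htε' : ∀ t' ∈ ({t} : Finset S), (t' : ℝ) < ε := by
        intro t' ht'
        rw [Finset.mem_singleton] at ht'
        rw [ht']
        exact htε
      have hAt := hpA (⟨{t}, Finset.singleton_nonempty t, htε'⟩, ⟨1, one_pos⟩)
      obtain ⟨s, hsB, hsA⟩ := Ultrafilter.nonempty_of_mem (Filter.inter_mem htB hAt)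
      exact hsA.2 t (Finset.mem_singleton_self t) (interior_subset hsB)
    · -- proximal near zero
      intro U hU ε hε
      have hUyy : U ∈ nhds (y, y) := mem_nhdsSet_iff_forall.mp hU (y, y) rfl
      rw [mem_nhds_prod_iff] at hUyy
      obtain ⟨V, hV, V', hV', hVV'⟩ := hUyy
      have h1 : {s : S | D.T s x ∈ interior V} ∈ u :=
        D.Tp_mem_open isOpen_interior (by rw [hTux]; exact mem_interior_iff_mem_nhds.mpr hV)
      have h2 : {s : S | D.T s y ∈ interior V'} ∈ u :=
        D.Tp_mem_open isOpen_interior (by rw [hTuy]; exact mem_interior_iff_mem_nhds.mpr hV')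
      have h3 : {s : S | (s : ℝ) < ε} ∈ u := huO ε hε
      obtain ⟨s, hs1, hs2, hs3⟩ :=
        Ultrafilter.nonempty_of_mem (Filter.inter_mem h1 (Filter.inter_mem h2 h3))
      exact ⟨s, hs3, hVV' (Set.mk_mem_prod (interior_subset hs1) (interior_subset hs2))⟩
  · rintro ⟨hur, hprox⟩
    haveI : Nonempty
        ({U : Set (D.X × D.X) // U ∈ nhdsSet (Set.diagonal D.X)} × {ε : ℝ // 0 < ε}) :=
      ⟨⟨⟨Set.univ, Filter.univ_mem⟩, ⟨1, one_pos⟩⟩⟩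
    have hne0 : ∀ i : {U : Set (D.X × D.X) // U ∈ nhdsSet (Set.diagonal D.X)} × {ε : ℝ // 0 < ε},
        {s : S | (s : ℝ) < i.2.1 ∧ (D.T s x, D.T s y) ∈ i.1.1}.Nonempty := by
      rintro ⟨⟨U, hU⟩, ⟨ε, hε⟩⟩
      obtain ⟨s, h1, h2⟩ := hprox U hU ε hε
      exact ⟨s, h1, h2⟩
    have hdir0 : ∀ i j :
        {U : Set (D.X × D.X) // U ∈ nhdsSet (Set.diagonal D.X)} × {ε : ℝ // 0 < ε},
        ∃ k : {U : Set (D.X × D.X) // U ∈ nhdsSet (Set.diagonal D.X)} × {ε : ℝ // 0 < ε},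
          {s : S | (s : ℝ) < k.2.1 ∧ (D.T s x, D.T s y) ∈ k.1.1} ⊆
            {s : S | (s : ℝ) < i.2.1 ∧ (D.T s x, D.T s y) ∈ i.1.1} ∧
          {s : S | (s : ℝ) < k.2.1 ∧ (D.T s x, D.T s y) ∈ k.1.1} ⊆
            {s : S | (s : ℝ) < j.2.1 ∧ (D.T s x, D.T s y) ∈ j.1.1} := by
      rintro ⟨⟨U, hU⟩, ⟨ε, hε⟩⟩ ⟨⟨U', hU'⟩, ⟨ε', hε'⟩⟩
      refine ⟨(⟨U ∩ U', Filter.inter_mem hU hU'⟩, ⟨min ε ε', lt_min hε hε'⟩), ?_, ?_⟩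
      · rintro s ⟨h1, h2⟩
        exact ⟨h1.trans_le (min_le_left _ _), h2.1⟩
      · rintro s ⟨h1, h2⟩
        exact ⟨h1.trans_le (min_le_right _ _), h2.2⟩
    obtain ⟨p₀, hp₀⟩ := exists_ultra _ hne0 hdir0
    have hp₀O : p₀ ∈ Oplus S := fun ε hε =>
      Filter.mem_of_superset (hp₀ (⟨Set.univ, Filter.univ_mem⟩, ⟨ε, hε⟩)) fun s hs => hs.1
    have hp₀eq : D.Tp p₀ x = D.Tp p₀ y := by
      by_contra hne'
      have hpair : (D.Tp p₀ x, D.Tp p₀ y) ∈ (Set.diagonal D.X)ᶜ := hne'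
      obtain ⟨Cn, hCn, hCc, hCsub⟩ := exists_mem_nhds_isClosed_subset
        (isClosed_diagonal.isOpen_compl.mem_nhds hpair)
      have hCU : Cnᶜ ∈ nhdsSet (Set.diagonal D.X) :=
        (hCc.isOpen_compl.mem_nhdsSet).mpr fun z hz hzC => (hCsub hzC) hz
      have hmemA : {s : S | (s : ℝ) < 1 ∧ (D.T s x, D.T s y) ∈ Cnᶜ} ∈ p₀ :=
        hp₀ (⟨Cnᶜ, hCU⟩, ⟨1, one_pos⟩)
      have hten : Filter.Tendsto (fun s : S => (D.T s x, D.T s y)) ↑p₀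
          (nhds (D.Tp p₀ x, D.Tp p₀ y)) :=
        (D.tendsto_Tp p₀ x).prodMk_nhds (D.tendsto_Tp p₀ y)
      have hCmem : {s : S | (D.T s x, D.T s y) ∈ Cn} ∈ p₀ := Filter.mem_map.mp (hten hCn)
      obtain ⟨s, hs1, hs2⟩ :=
        Ultrafilter.nonempty_of_mem (Filter.inter_mem hmemA hCmem)
      exact hs1.2 hs2
    have hI₀id := isLeftIdeal_image hdense hp₀O
    have hI₀c := image_closed (S := S) p₀
    have hI₀eq : ∀ r ∈ (fun q => uadd q p₀) '' Oplus S, D.Tp r x = D.Tp r y := by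
      rintro _ ⟨q, hq, rfl⟩
      rw [D.Tp_uadd, D.Tp_uadd, hp₀eq]
    obtain ⟨L, hLsub, hLmin, hLc⟩ := exists_minimal_closed_leftIdeal hdense hI₀id hI₀c
    obtain ⟨pp, hppL⟩ := hLmin.1.1
    obtain ⟨q, hqO, hqy⟩ := ur_transfer hur (hLmin.1.2.1 hppL)
    have hwL : uadd q pp ∈ L := hLmin.1.2.2 q hqO pp hppL
    have hMne : (L ∩ {r : Ultrafilter S | D.Tp r y = y}).Nonempty := ⟨uadd q pp, hwL, hqy⟩
    have hMc : IsClosed (L ∩ {r : Ultrafilter S | D.Tp r y = y}) :=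
      hLc.inter (D.isClosed_Tp_fixed y y)
    have hMadd : ∀ a ∈ L ∩ {r : Ultrafilter S | D.Tp r y = y},
        ∀ b ∈ L ∩ {r : Ultrafilter S | D.Tp r y = y},
          uadd a b ∈ L ∩ {r : Ultrafilter S | D.Tp r y = y} := by
      intro a ha b hb
      refine ⟨hLmin.1.2.2 a (hLmin.1.2.1 ha.1) b hb.1, ?_⟩
      show D.Tp (uadd a b) y = y
      rw [D.Tp_uadd, hb.2]
      exact ha.2
    letI : AddSemigroup (Ultrafilter S) := { add := uadd, add_assoc := uadd_assoc' }
    obtain ⟨u, huM, huid⟩ := exists_idempotent_in_compact_add_subsemigroup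
      (fun r => continuous_uadd_right r) _ hMne hMc.isCompact hMadd
    refine ⟨u, ⟨L, hLmin, huM.1⟩, huid, ?_⟩
    rw [hI₀eq u (hLsub huM.1)]
    exact huM.2
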